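/- arXiv:2204.07623 — 3 statements merged into one kernel-verified Lean document; each statement's English description precedes it below -/
import Mathlib

section
/- Fix a dimension n, a constant c > 0 and positive weights γ : Fin n → ℝ (γᵢ > 0 for all i). Define δ : ℝⁿ → ℝ by δ(ξ) = (π/c)·√(Σᵢ γᵢ ξᵢ²) and g : ℝⁿ → ℝ by g(ξ) = 1 + cos(δ(ξ)) if δ(ξ) ≤ π and g(ξ) = 0 otherwise. Then g is differentiable at every point of ℝⁿ. -/
open Real Filter Topology Asymptotics

/-! With `T = diag(√γ)`, `δ ξ = (π/c)‖T ξ‖` and `g = h ∘ δ`, where `h t = 1 + cos t` for `t ≤ π`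
and `h t = 0` otherwise. The cutoff `h` is differentiable on all of `ℝ`: at `π` both one-sided
derivatives vanish because `sin π = 0`. Where `T ξ ≠ 0` the norm is smooth and the chain rule
applies. Where `T ξ = 0` the norm is only Lipschitz, but `h'(0) = -sin 0 = 0`, and an outer
function with vanishing derivative composed with a Lipschitz function has vanishing derivative. -/

theorem HasDerivAt.hasFDerivAt_comp_of_isBigO {𝕜 E F : Type*} [NontriviallyNormedField 𝕜]
    [NormedAddCommGroup E] [NormedSpace 𝕜 E] [NormedAddCommGroup F] [NormedSpace 𝕜 F]
    {f : 𝕜 → F} {u : E → 𝕜} {x : E} (hf : HasDerivAt f 0 (u x))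
    (hu : (fun y => u y - u x) =O[𝓝 x] fun y => y - x) :
    HasFDerivAt (f ∘ u) (0 : E →L[𝕜] F) x := by
  have hux : Tendsto u (𝓝 x) (𝓝 (u x)) :=
    tendsto_sub_nhds_zero_iff.mp (hu.trans_tendsto (tendsto_sub_nhds_zero_iff.mpr tendsto_id))
  rw [hasDerivAt_iff_isLittleO] at hf
  rw [hasFDerivAt_iff_isLittleO]
  simp only [smul_zero, sub_zero] at hf
  simp only [zero_apply, sub_zero]
  exact (hf.comp_tendsto hux).trans_isBigO hu

theorem ContinuousLinearMap.isBigO_norm_apply_sub_norm_apply {𝕜 E F : Type*}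
    [NontriviallyNormedField 𝕜] [NormedAddCommGroup E] [NormedSpace 𝕜 E]
    [NormedAddCommGroup F] [NormedSpace 𝕜 F] (T : E →L[𝕜] F) (x : E) (l : Filter E) :
    (fun y => ‖T y‖ - ‖T x‖) =O[l] fun y => y - x :=
  IsBigO.of_bound ‖T‖ <| Eventually.of_forall fun y =>
    calc ‖‖T y‖ - ‖T x‖‖ ≤ ‖T y - T x‖ := by
          rw [Real.norm_eq_abs]; exact abs_norm_sub_norm_le _ _
      _ = ‖T (y - x)‖ := by rw [map_sub]
      _ ≤ ‖T‖ * ‖y - x‖ := T.le_opNorm _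

section Diagonal

variable {ι : Type*} [Fintype ι] [DecidableEq ι]

theorem Matrix.toEuclideanCLM_diagonal_apply (w : ι → ℝ) (x : EuclideanSpace ℝ ι) (i : ι) :
    Matrix.toEuclideanCLM (𝕜 := ℝ) (Matrix.diagonal w) x i = w i * x i := by
  rw [← ContinuousLinearMap.coe_coe, Matrix.coe_toEuclideanCLM_eq_toEuclideanLin]
  simp [Matrix.ofLp_toLpLin, Matrix.mulVec_diagonal]

theorem Matrix.norm_toEuclideanCLM_diagonal_sqrt {γ : ι → ℝ} (hγ : ∀ i, 0 ≤ γ i)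
    (x : EuclideanSpace ℝ ι) :
    ‖Matrix.toEuclideanCLM (𝕜 := ℝ) (Matrix.diagonal fun i => √(γ i)) x‖ =
      √(∑ i, γ i * x i ^ 2) := by
  simp only [EuclideanSpace.norm_eq, toEuclideanCLM_diagonal_apply, Real.norm_eq_abs, sq_abs,
    mul_pow, Real.sq_sqrt (hγ _)]

end Diagonal

noncomputable def raisedCosCutoff (t : ℝ) : ℝ :=
  if t ≤ π then 1 + cos t else 0

theorem hasDerivAt_raisedCosCutoff_of_lt {t : ℝ} (ht : t < π) :
    HasDerivAt raisedCosCutoff (-sin t) t := by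
  refine ((hasDerivAt_cos t).const_add 1).congr_of_eventuallyEq ?_
  filter_upwards [Iio_mem_nhds ht] with s hs
  exact if_pos hs.le

theorem raisedCosCutoff_eq_zero_of_pi_le {t : ℝ} (ht : π ≤ t) : raisedCosCutoff t = 0 := by
  rcases ht.eq_or_lt with rfl | hlt
  · simp [raisedCosCutoff]
  · exact if_neg (not_le.mpr hlt)

theorem hasDerivAt_raisedCosCutoff_of_gt {t : ℝ} (ht : π < t) :
    HasDerivAt raisedCosCutoff 0 t := by
  refine (hasDerivAt_const t 0).congr_of_eventuallyEq ?_
  filter_upwards [Ioi_mem_nhds ht] with s hs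
  exact raisedCosCutoff_eq_zero_of_pi_le hs.le

theorem hasDerivAt_raisedCosCutoff_pi : HasDerivAt raisedCosCutoff 0 π := by
  have h_left : HasDerivWithinAt raisedCosCutoff 0 (Set.Iic π) π := by
    have := ((hasDerivAt_cos π).const_add 1).hasDerivWithinAt (s := Set.Iic π)
    rw [sin_pi, neg_zero] at this
    exact this.congr (fun t ht => if_pos ht) (if_pos le_rfl)
  have h_right : HasDerivWithinAt raisedCosCutoff 0 (Set.Ici π) π :=
    (hasDerivAt_const π (0 : ℝ)).hasDerivWithinAt.congr
      (fun _ ht => raisedCosCutoff_eq_zero_of_pi_le ht) (raisedCosCutoff_eq_zero_of_pi_le le_rfl)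
  have := h_left.union h_right
  rwa [Set.Iic_union_Ici, hasDerivWithinAt_univ] at this

theorem differentiable_raisedCosCutoff : Differentiable ℝ raisedCosCutoff := fun t => by
  rcases lt_trichotomy t π with ht | rfl | ht
  · exact (hasDerivAt_raisedCosCutoff_of_lt ht).differentiableAt
  · exact hasDerivAt_raisedCosCutoff_pi.differentiableAt
  · exact (hasDerivAt_raisedCosCutoff_of_gt ht).differentiableAt

theorem kernel_differentiable_general
    (n : ℕ) (c : ℝ)
    (γ : Fin n → ℝ) (hγ : ∀ i, 0 < γ i)
    (δ : EuclideanSpace ℝ (Fin n) → ℝ)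
    (hδ : ∀ ξ, δ ξ = (π / c) * Real.sqrt (∑ i, γ i * ξ i ^ 2))
    (g : EuclideanSpace ℝ (Fin n) → ℝ)
    (hg : ∀ ξ, g ξ = if δ ξ ≤ π then 1 + Real.cos (δ ξ) else 0) :
    ∀ ξ : EuclideanSpace ℝ (Fin n), DifferentiableAt ℝ g ξ := by
  intro ξ
  set T := Matrix.toEuclideanCLM (𝕜 := ℝ) (Matrix.diagonal fun i => √(γ i))
  have hδT : δ = fun y => π / c * ‖T y‖ := funext fun y => by
    rw [hδ, Matrix.norm_toEuclideanCLM_diagonal_sqrt fun i => (hγ i).le]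
  have hgδ : g = raisedCosCutoff ∘ δ := funext hg
  rw [hgδ]
  by_cases hTξ : T ξ = 0
  · have hδξ : δ ξ = 0 := by simp [hδT, hTξ]
    refine (HasDerivAt.hasFDerivAt_comp_of_isBigO ?_ ?_).differentiableAt
    · simpa [hδξ] using hasDerivAt_raisedCosCutoff_of_lt pi_pos
    · rw [hδT]
      refine ((T.isBigO_norm_apply_sub_norm_apply ξ _).const_mul_left (π / c)).congr_left
        fun y => by ring
  · rw [hδT]
    exact differentiable_raisedCosCutoff.differentiableAt.comp ξ
      ((T.differentiableAt.norm ℝ hTξ).const_mul _)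

/-- The unnormalized weighting kernel `g(ξ) = (1 + cos δ(ξ))` for `δ(ξ) ≤ π` and `0`
otherwise, with `δ(ξ) = (π/c)·√(∑ i, γ i * ξ i ^ 2)`, is differentiable everywhere. -/
theorem kernel_differentiable
    (n : ℕ) (c : ℝ) (hc : 0 < c)
    (γ : Fin n → ℝ) (hγ : ∀ i, 0 < γ i)
    (δ : EuclideanSpace ℝ (Fin n) → ℝ)
    (hδ : ∀ ξ, δ ξ = (π / c) * Real.sqrt (∑ i, γ i * ξ i ^ 2))
    (g : EuclideanSpace ℝ (Fin n) → ℝ)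
    (hg : ∀ ξ, g ξ = if δ ξ ≤ π then 1 + Real.cos (δ ξ) else 0) :
    ∀ ξ : EuclideanSpace ℝ (Fin n), DifferentiableAt ℝ g ξ :=
  kernel_differentiable_general n c γ hγ δ hδ g hg
end

section
/- Fix a dimension n, a constant c > 0 and positive weights γ : Fin n → ℝ (γᵢ > 0 for all i). Define δ : ℝⁿ → ℝ by δ(ξ) = (π/c)·√(Σᵢ γᵢ ξᵢ²) and g : ℝⁿ → ℝ by g(ξ) = 1 + cos(δ(ξ)) if δ(ξ) ≤ π and g(ξ) = 0 otherwise. Then for every ξ ∈ ℝⁿ with δ(ξ) = π, g is differentiable at ξ with Fréchet derivative equal to the zero map. -/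
open Real Asymptotics Topology

/-!
Write `g = φ ∘ δ` with `φ = cosineCutoff`. Since `1 + cos t = 1 - cos (t - π) ≤ (t - π) ^ 2 / 2`,
the cutoff `φ` vanishes to second order at `π`, so `φ'(π) = 0` although `φ` is only piecewise
smooth. Where `δ ξ = π` the weighted quadratic form is nonzero, so `δ`, a multiple of its square
root, is differentiable at `ξ`, and the chain rule gives `Dg(ξ) = φ'(π) • Dδ(ξ) = 0`.
-/

lemma one_add_cos_le_sq_sub_pi_div_two (t : ℝ) : 1 + cos t ≤ (t - π) ^ 2 / 2 := by
  have h := one_sub_sq_div_two_le_cos (x := t - π)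
  rw [cos_sub_pi] at h
  linarith

noncomputable def cosineCutoff (t : ℝ) : ℝ := if t ≤ π then 1 + cos t else 0

lemma abs_cosineCutoff_le (t : ℝ) : |cosineCutoff t| ≤ (t - π) ^ 2 / 2 := by
  unfold cosineCutoff
  split_ifs
  · rw [abs_of_nonneg (by linarith [neg_one_le_cos t])]
    exact one_add_cos_le_sq_sub_pi_div_two t
  · rw [abs_zero]
    positivity

lemma hasDerivAt_cosineCutoff_pi : HasDerivAt cosineCutoff 0 π := by
  have h : cosineCutoff =O[𝓝 π] fun t => ‖t - π‖ ^ 2 :=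
    .of_bound (1 / 2) <| .of_forall fun t => by
      simpa [div_eq_inv_mul] using abs_cosineCutoff_le t
  simpa using (h.hasFDerivAt one_lt_two).hasDerivAt

theorem kernel_differentiable_at_boundary_general
    (n : ℕ) (c : ℝ)
    (γ : Fin n → ℝ)
    (δ : EuclideanSpace ℝ (Fin n) → ℝ)
    (hδ : ∀ ξ, δ ξ = (π / c) * Real.sqrt (∑ i, γ i * ξ i ^ 2))
    (g : EuclideanSpace ℝ (Fin n) → ℝ)
    (hg : ∀ ξ, g ξ = if δ ξ ≤ π then 1 + Real.cos (δ ξ) else 0)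
    (ξ : EuclideanSpace ℝ (Fin n)) (hξ : δ ξ = π) :
    HasFDerivAt g (0 : EuclideanSpace ℝ (Fin n) →L[ℝ] ℝ) ξ := by
  have hQ : ∑ i, γ i * ξ i ^ 2 ≠ 0 := by
    intro h0
    rw [hδ, h0, sqrt_zero, mul_zero] at hξ
    exact pi_ne_zero hξ.symm
  have hδ_diff : DifferentiableAt ℝ δ ξ := by
    rw [funext hδ]
    fun_prop (disch := exact hQ)
  have hφ : HasDerivAt cosineCutoff 0 (δ ξ) := hξ ▸ hasDerivAt_cosineCutoff_pi
  rw [show g = cosineCutoff ∘ δ from funext hg, ← zero_smul ℝ (fderiv ℝ δ ξ)]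
  exact hφ.comp_hasFDerivAt ξ hδ_diff.hasFDerivAt

/-- At the cutoff boundary `δ(ξ) = π`, the kernel `g` (equal to `1 + cos δ` inside the
cutoff and `0` outside) is differentiable with zero Fréchet derivative, since both the
function value and the one-sided derivatives vanish there (`sin π = 0`). -/
theorem kernel_differentiable_at_boundary
    (n : ℕ) (c : ℝ) (hc : 0 < c)
    (γ : Fin n → ℝ) (hγ : ∀ i, 0 < γ i)
    (δ : EuclideanSpace ℝ (Fin n) → ℝ)
    (hδ : ∀ ξ, δ ξ = (π / c) * Real.sqrt (∑ i, γ i * ξ i ^ 2))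
    (g : EuclideanSpace ℝ (Fin n) → ℝ)
    (hg : ∀ ξ, g ξ = if δ ξ ≤ π then 1 + Real.cos (δ ξ) else 0)
    (ξ : EuclideanSpace ℝ (Fin n)) (hξ : δ ξ = π) :
    HasFDerivAt g (0 : EuclideanSpace ℝ (Fin n) →L[ℝ] ℝ) ξ :=
  kernel_differentiable_at_boundary_general n c γ δ hδ g hg ξ hξ
end

section
/- Fix a dimension n, a constant c > 0 and positive weights γ : Fin n → ℝ (γᵢ > 0 for all i). Define δ : ℝⁿ → ℝ by δ(ξ) = (π/c)·√(Σᵢ γᵢ ξᵢ²) and g : ℝⁿ → ℝ by g(ξ) = 1 + cos(δ(ξ)) if δ(ξ) ≤ π and g(ξ) = 0 otherwise. Let S be a finite set of viewpoints v ∈ ℝⁿ with associated information values I_v ∈ ℝ, define η(x) = Σ_{v∈S} g(v − x), β(x) = Σ_{v∈S} I_v · g(v − x), and Ĩ(x) = β(x)/η(x). Let x ∈ ℝⁿ satisfy η(x) > 0 and δ(v − x) ≠ 0 for every v ∈ S. Then Ĩ is differentiable at x, and the gradient of Ĩ at x equals (π/(c·η(x)))² · Σ_{v ∈ S, δ(v−x)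 ≤ π} [η(x)·I_v − β(x)] · (sin δ(v−x)/δ(v−x)) · Γ(v − x), where Γ = diag(γ). -/
/-!
`Ĩ = β / η` is the average of the values `I v` under the weights `g (v - x)`, so by the quotient
rule its derivative is `η⁻² ∑ v, (η I_v - β) ∇ₓ g (v - x)`. The kernel is `g = φ ∘ δ` for the
profile `φ t = 1 + cos t` (`t ≤ π`), `0` (`t > π`), which is differentiable everywhere because both
one-sided derivatives vanish at the cutoff (`sin π = 0`); `δ` is smooth away from its zeros with
`∇δ(ξ) = (π/c)² Γ ξ / δ(ξ)`. Hence `∇ₓ g (v - x) = (π/c)² (sin δ / δ) Γ (v - x)` inside the cutoff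
and `0` outside it.
-/

open Real

noncomputable def raisedCosine (t : ℝ) : ℝ := if t ≤ π then 1 + cos t else 0

theorem raisedCosine_eq_zero_of_pi_le {t : ℝ} (ht : π ≤ t) : raisedCosine t = 0 := by
  rcases ht.eq_or_lt with rfl | ht
  · simp [raisedCosine]
  · exact if_neg (not_le.2 ht)

theorem hasDerivAt_raisedCosine (t : ℝ) :
    HasDerivAt raisedCosine (if t ≤ π then -sin t else 0) t := by
  have hcos (t : ℝ) : HasDerivAt (fun s => 1 + cos s) (-sin t) t :=
    (hasDerivAt_cos t).const_add 1
  rcases lt_trichotomy t π with ht | rfl | ht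
  · rw [if_pos ht.le]
    refine (hcos t).congr_of_eventuallyEq ?_
    filter_upwards [Iio_mem_nhds ht] with s hs
    exact if_pos (le_of_lt hs)
  · rw [if_pos le_rfl, ← hasDerivWithinAt_univ, ← Set.Iic_union_Ici]
    refine .union ?_ ?_
    · exact (hcos π).hasDerivWithinAt.congr (fun s hs => if_pos hs) (if_pos le_rfl)
    · rw [sin_pi, neg_zero]
      exact (hasDerivWithinAt_const π _ 0).congr (fun s hs => raisedCosine_eq_zero_of_pi_le hs)
        (raisedCosine_eq_zero_of_pi_le le_rfl)
  · rw [if_neg (not_le.2 ht)]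
    refine (hasDerivAt_const t 0).congr_of_eventuallyEq ?_
    filter_upwards [Ioi_mem_nhds ht] with s hs
    exact raisedCosine_eq_zero_of_pi_le hs.le

section Weighted

variable {ι : Type*} [Fintype ι] (γ : ι → ℝ)

def weightedSumSq (ξ : EuclideanSpace ℝ ι) : ℝ := ∑ i, γ i * ξ i ^ 2

noncomputable def weightedInner (ξ : EuclideanSpace ℝ ι) : EuclideanSpace ℝ ι →L[ℝ] ℝ :=
  ∑ i, (γ i * ξ i) • EuclideanSpace.proj i

@[simp]
theorem weightedInner_apply (ξ h : EuclideanSpace ℝ ι) :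
    weightedInner γ ξ h = ∑ i, γ i * ξ i * h i := by
  simp [weightedInner]

theorem hasFDerivAt_weightedSumSq (ξ : EuclideanSpace ℝ ι) :
    HasFDerivAt (weightedSumSq γ) ((2 : ℝ) • weightedInner γ ξ) ξ := by
  have hcoord (i : ι) : HasFDerivAt (fun ζ : EuclideanSpace ℝ ι => γ i * ζ i ^ 2)
      ((γ i * (2 * ξ i)) • EuclideanSpace.proj (𝕜 := ℝ) i) ξ := by
    simpa [smul_smul] using
      (((EuclideanSpace.proj (𝕜 := ℝ) i).hasFDerivAt (x := ξ)).pow 2).const_mul (γ i)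
  refine (HasFDerivAt.fun_sum fun i _ => hcoord i).congr_fderiv ?_
  ext h
  simp only [sum_apply, smul_apply, weightedInner_apply,
    PiLp.proj_apply, smul_eq_mul, Finset.mul_sum]
  exact Finset.sum_congr rfl fun i _ => by ring

noncomputable def scaledDist (a : ℝ) (ξ : EuclideanSpace ℝ ι) : ℝ := a * √(weightedSumSq γ ξ)

theorem hasFDerivAt_scaledDist {a : ℝ} {ξ : EuclideanSpace ℝ ι} (hξ : scaledDist γ a ξ ≠ 0) :
    HasFDerivAt (scaledDist γ a) ((a ^ 2 / scaledDist γ a ξ) • weightedInner γ ξ) ξ := by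
  have hq : weightedSumSq γ ξ ≠ 0 := fun h => hξ (by simp [scaledDist, h])
  have hs : √(weightedSumSq γ ξ) ≠ 0 := right_ne_zero_of_mul hξ
  have ha : a ≠ 0 := left_ne_zero_of_mul hξ
  refine (((hasFDerivAt_weightedSumSq γ ξ).sqrt hq).const_mul a).congr_fderiv ?_
  rw [smul_smul, smul_smul, scaledDist]
  congr 1
  field_simp

theorem hasFDerivAt_raisedCosine_scaledDist_sub {a : ℝ} {v x : EuclideanSpace ℝ ι}
    (hx : scaledDist γ a (v - x) ≠ 0) :
    HasFDerivAt (fun y => raisedCosine (scaledDist γ a (v - y)))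
      (if scaledDist γ a (v - x) ≤ π then
        (a ^ 2 * (sin (scaledDist γ a (v - x)) / scaledDist γ a (v - x))) • weightedInner γ (v - x)
      else 0) x := by
  refine ((hasDerivAt_raisedCosine _).comp_hasFDerivAt x
    ((hasFDerivAt_scaledDist γ hx).comp x ((hasFDerivAt_id x).const_sub v))).congr_fderiv ?_
  simp only [Function.comp_apply]
  split_ifs
  · rw [ContinuousLinearMap.comp_neg, ContinuousLinearMap.comp_id, smul_neg, smul_smul,
      ← neg_smul]
    congr 1
    ring
  · simp

end Weighted

theorem hasFDerivAt_weightedSum_div_sum {E ι : Type*} [NormedAddCommGroup E] [NormedSpace ℝ E]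
    {S : Finset ι} (w : ι → ℝ) {k : ι → E → ℝ} {k' : ι → E →L[ℝ] ℝ} {x : E}
    (hk : ∀ v ∈ S, HasFDerivAt (k v) (k' v) x) (hx : ∑ v ∈ S, k v x ≠ 0) :
    HasFDerivAt (fun y => (∑ v ∈ S, w v * k v y) / ∑ v ∈ S, k v y)
      (((∑ v ∈ S, k v x) ^ 2)⁻¹ •
        ∑ v ∈ S, ((∑ u ∈ S, k u x) * w v - ∑ u ∈ S, w u * k u x) • k' v) x := by
  have hsum : HasFDerivAt (fun y => ∑ v ∈ S, k v y) (∑ v ∈ S, k' v) x := .fun_sum hk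
  have hwsum : HasFDerivAt (fun y => ∑ v ∈ S, w v * k v y) (∑ v ∈ S, w v • k' v) x :=
    .fun_sum fun v hv => (hk v hv).const_mul (w v)
  simp_rw [div_eq_mul_inv]
  refine (hwsum.mul ((hasDerivAt_inv hx).comp_hasFDerivAt x hsum)).congr_fderiv ?_
  ext h
  simp only [Function.comp_apply, add_apply, smul_apply, sum_apply, smul_eq_mul, sub_mul,
    Finset.sum_sub_distrib, ← Finset.mul_sum, mul_assoc]
  field_simp
  ring

theorem approxSMI_gradient_general
    (n : ℕ) (c : ℝ)
    (γ : Fin n → ℝ)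
    (δ : EuclideanSpace ℝ (Fin n) → ℝ)
    (hδ : ∀ ξ, δ ξ = (π / c) * Real.sqrt (∑ i, γ i * ξ i ^ 2))
    (g : EuclideanSpace ℝ (Fin n) → ℝ)
    (hg : ∀ ξ, g ξ = if δ ξ ≤ π then 1 + Real.cos (δ ξ) else 0)
    (S : Finset (EuclideanSpace ℝ (Fin n)))
    (I : EuclideanSpace ℝ (Fin n) → ℝ)
    (η β Iapprox : EuclideanSpace ℝ (Fin n) → ℝ)
    (hη : ∀ x, η x = ∑ v ∈ S, g (v - x))
    (hβ : ∀ x, β x = ∑ v ∈ S, I v * g (v - x))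
    (hIapprox : ∀ x, Iapprox x = β x / η x)
    (x : EuclideanSpace ℝ (Fin n))
    (hηx : 0 < η x)
    (hδx : ∀ v ∈ S, δ (v - x) ≠ 0) :
    DifferentiableAt ℝ Iapprox x ∧
      ∀ h : EuclideanSpace ℝ (Fin n),
        fderiv ℝ Iapprox x h
          = (π / (c * η x)) ^ 2 *
              ∑ v ∈ S.filter (fun v => δ (v - x) ≤ π),
                (η x * I v - β x) * (Real.sin (δ (v - x)) / δ (v - x)) *
                  ∑ i, γ i * (v - x) i * h i := by
  obtain rfl : δ = scaledDist γ (π / c) := funext hδ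
  have hk (v : EuclideanSpace ℝ (Fin n)) (hv : v ∈ S) := funext (fun y => hg (v - y)) ▸
    hasFDerivAt_raisedCosine_scaledDist_sub γ (hδx v hv)
  obtain rfl : Iapprox = fun y => (∑ v ∈ S, I v * g (v - y)) / ∑ v ∈ S, g (v - y) :=
    funext fun y => by rw [hIapprox, hη, hβ]
  have hD := hasFDerivAt_weightedSum_div_sum I hk (hη x ▸ hηx.ne')
  refine ⟨hD.differentiableAt, fun h => ?_⟩
  rw [hD.fderiv, ← hη x, ← hβ x, Finset.sum_filter, Finset.mul_sum, smul_apply, sum_apply,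
    smul_eq_mul, Finset.mul_sum]
  refine Finset.sum_congr rfl fun v _ => ?_
  split_ifs
  · simp only [smul_apply, weightedInner_apply, smul_eq_mul]
    ring
  · simp

/-- Closed-form gradient of the approximate mutual information (translation form of
Proposition 2): at a point `x` with `η(x) > 0` and `δ(v − x) ≠ 0` for all viewpoints
`v ∈ S`, the map `Ĩ = β/η` is differentiable and its Fréchet derivative in direction
`h` equals `(π/(c·η(x)))² · ∑_{v ∈ S, δ(v−x) ≤ π} (η(x)·I_v − β(x)) ·
(sin δ(v−x)/δ(v−x)) · ⟨Γ(v−x), h⟩`. -/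
theorem approxSMI_gradient
    (n : ℕ) (c : ℝ) (hc : 0 < c)
    (γ : Fin n → ℝ) (hγ : ∀ i, 0 < γ i)
    (δ : EuclideanSpace ℝ (Fin n) → ℝ)
    (hδ : ∀ ξ, δ ξ = (π / c) * Real.sqrt (∑ i, γ i * ξ i ^ 2))
    (g : EuclideanSpace ℝ (Fin n) → ℝ)
    (hg : ∀ ξ, g ξ = if δ ξ ≤ π then 1 + Real.cos (δ ξ) else 0)
    (S : Finset (EuclideanSpace ℝ (Fin n)))
    (I : EuclideanSpace ℝ (Fin n) → ℝ)
    (η β Iapprox : EuclideanSpace ℝ (Fin n) → ℝ)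
    (hη : ∀ x, η x = ∑ v ∈ S, g (v - x))
    (hβ : ∀ x, β x = ∑ v ∈ S, I v * g (v - x))
    (hIapprox : ∀ x, Iapprox x = β x / η x)
    (x : EuclideanSpace ℝ (Fin n))
    (hηx : 0 < η x)
    (hδx : ∀ v ∈ S, δ (v - x) ≠ 0) :
    DifferentiableAt ℝ Iapprox x ∧
      ∀ h : EuclideanSpace ℝ (Fin n),
        fderiv ℝ Iapprox x h
          = (π / (c * η x)) ^ 2 *
              ∑ v ∈ S.filter (fun v => δ (v - x) ≤ π),
                (η x * I v - β x) * (Real.sin (δ (v - x)) / δ (v - x)) *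
                  ∑ i, γ i * (v - x) i * h i :=
  approxSMI_gradient_general n c γ δ hδ g hg S I η β Iapprox hη hβ hIapprox x hηx hδx
end
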